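/- For bundles π : E → B and π' : E' → B' and a morphism of Dirichlet functors between their extents corresponding to a bundle map (f : B → B', g : E → E'), the induced natural transformation is cartesian if and only if the square with sides π, π', f, g is a pullback square in Set. -/

import Mathlib

open CategoryTheory CategoryTheory.Limits Opposite

universe u

/-- The fiber `π⁻¹(b)` of a bundle `π : E → B` over `b ∈ B`. -/
abbrev fiber (π : Arrow (Type u)) (b : π.right) : Type u := { e : π.left // π.hom e = b }

/-- The Dirichlet extent functor `Set^↓ → Fun(Setᵒᵖ, Set)`, sending a bundle
`π : E → B` to `X ↦ Σ (b : B), (X → π⁻¹ b)` and a bundle map `(f, g)` to the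
natural transformation `(b, h) ↦ (f b, g ∘ h)`. -/
def DirExt : Arrow (Type u) ⥤ ((Type u)ᵒᵖ ⥤ Type u) where
  obj π :=
    { obj := fun X => Σ b : π.right, X.unop → fiber π b
      map := fun g => TypeCat.ofHom fun s => ⟨s.1, fun y => s.2 (g.unop y)⟩ }
  map {π π'} φ :=
    { app := fun X => TypeCat.ofHom fun s =>
        ⟨φ.right s.1, fun x =>
          ⟨φ.left (s.2 x).1, by
            have h := congrArg (fun k => k (s.2 x).1) φ.w
            simp only [Functor.id_map, types_comp_apply] at h
            rw [h]; exact congrArg φ.right (s.2 x).2⟩⟩ }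

/-!
Evaluating an extent at `PUnit` and at `PEmpty` recovers the total space `E` and the base `B`,
and the naturality square of the extent map along `PEmpty → PUnit` is the square `(π, π', f, g)`
itself; so cartesian extent maps come from pullback squares. Conversely, a pullback square
restricts `g` to bijections `π⁻¹(b) ≃ π'⁻¹(f b)`, and on the summand at `b` the extent map is
postcomposition with that bijection; a lift through a naturality square is then obtained by
postcomposing with the inverse bijection.
-/

namespace DirExt

variable {π π' : Arrow (Type u)} (φ : π ⟶ π')

def fiberMap (b : π.right) (e : fiber π b) : fiber π' (φ.right b) :=
  ⟨φ.left e.1, (ConcreteCategory.congr_hom φ.w e.1).trans (congrArg φ.right e.2)⟩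

lemma bijective_fiberMap_of_isPullback (hφ : IsPullback φ.left π.hom π'.hom φ.right)
    (b : π.right) : Function.Bijective (fiberMap φ b) := by
  obtain ⟨-, hinj, hex⟩ := (Types.isPullback_iff _ _ _ _).1 hφ
  refine ⟨fun e₁ e₂ he => Subtype.ext (hinj _ _ ⟨congrArg Subtype.val he, e₁.2.trans e₂.2.symm⟩),
    fun e' => ?_⟩
  obtain ⟨e, hee', heb⟩ := hex e'.1 b e'.2
  exact ⟨⟨e, heb⟩, Subtype.ext hee'⟩

lemma isPullback_naturality_of_bijective_fiberMap (hφ : ∀ b, Function.Bijective (fiberMap φ b))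
    {X X' : (Type u)ᵒᵖ} (g : X ⟶ X') :
    IsPullback ((DirExt.map φ).app X) ((DirExt.obj π).map g)
      ((DirExt.obj π').map g) ((DirExt.map φ).app X') := by
  refine (Types.isPullback_iff _ _ _ _).2 ⟨((DirExt.map φ).naturality g).symm, ?_, ?_⟩
  · rintro ⟨b₁, h₁⟩ ⟨b₂, h₂⟩ ⟨happ, hmap⟩
    obtain rfl : b₁ = b₂ := congrArg Sigma.fst hmap
    exact congrArg (Sigma.mk b₁) ((hφ b₁).1.comp_left (sigma_mk_injective happ))
  · rintro ⟨b', h'⟩ ⟨b, k⟩ hcompat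
    obtain rfl : b' = φ.right b := congrArg Sigma.fst hcompat
    have hk : h' ∘ g.unop = fiberMap φ b ∘ k := sigma_mk_injective hcompat
    let e := Equiv.ofBijective _ (hφ b)
    refine ⟨⟨b, e.symm ∘ h'⟩, ?_, ?_⟩
    · exact congrArg (Sigma.mk _) (funext fun x => e.apply_symm_apply (h' x))
    · exact congrArg (Sigma.mk b) (funext fun y => e.symm_apply_eq.2 (congrFun hk y))

variable (π) in
def objPUnitIso : (DirExt.obj π).obj (op PUnit) ≅ π.left :=
  ((Equiv.sigmaCongrRight fun b => Equiv.funUnique PUnit (fiber π b)).trans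
    (Equiv.sigmaFiberEquiv π.hom)).toIso

variable (π) in
def objPEmptyIso : (DirExt.obj π).obj (op PEmpty) ≅ π.right :=
  (Equiv.sigmaUnique π.right _).toIso

lemma isPullback_of_isPullback_naturality {g : op PUnit.{u + 1} ⟶ op PEmpty.{u + 1}}
    (h : IsPullback ((DirExt.map φ).app (op PUnit)) ((DirExt.obj π).map g)
      ((DirExt.obj π').map g) ((DirExt.map φ).app (op PEmpty))) :
    IsPullback φ.left π.hom π'.hom φ.right :=
  h.of_iso (objPUnitIso π) (objPUnitIso π') (objPEmptyIso π) (objPEmptyIso π')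
    (by ext; rfl) (by ext ⟨b, e⟩; exact (e PUnit.unit).2.symm)
    (by ext ⟨b, e⟩; exact (e PUnit.unit).2.symm) (by ext; rfl)

end DirExt

/-- For bundles `π, π'` and a bundle map `φ = (g : E → E', f : B → B')`,
the induced natural transformation between the Dirichlet extents is cartesian
(all naturality squares are pullbacks) if and only if the square with sides
`π, π', f, g` is a pullback square in `Set`. -/
theorem dirExt_map_cartesian_iff_isPullback (π π' : Arrow (Type u)) (φ : π ⟶ π') :
    (∀ (X X' : (Type u)ᵒᵖ) (g : X ⟶ X'),
        IsPullback ((DirExt.map φ).app X) ((DirExt.obj π).map g)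
          ((DirExt.obj π').map g) ((DirExt.map φ).app X')) ↔
      IsPullback φ.left π.hom π'.hom φ.right :=
  ⟨fun H => DirExt.isPullback_of_isPullback_naturality φ (H _ _ (TypeCat.ofHom isEmptyElim).op),
    fun hφ _ _ g => DirExt.isPullback_naturality_of_bijective_fiberMap φ
      (DirExt.bijective_fiberMap_of_isPullback φ hφ) g⟩
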